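/- Let A be the 4th-order 2-dimensional real tensor with all entries zero except A_{1112}=A_{1222}=1 and A_{2111}=A_{2122}=-1. Then A has no real Z-eigenpair; that is, there is no real number λ and real vector u ∈ ℝ² with u^T u = 1 such that A u³ = λ u, where (A u³)_j = Σ_{i₂,i₃,i₄} A_{j i₂ i₃ i₄} u_{i₂} u_{i₃} u_{i₄}. -/

import Mathlib

open Finset

/-- For a 4th-order 2-dimensional tensor `A`, `(A x³)_j = ∑ A_{j i₂ i₃ i₄} x_{i₂} x_{i₃} x_{i₄}`. -/
noncomputable def app3 (A : Fin 2 → Fin 2 → Fin 2 → Fin 2 → ℝ) (x : Fin 2 → ℝ) :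
    Fin 2 → ℝ :=
  fun j => ∑ a : Fin 2, ∑ b : Fin 2, ∑ c : Fin 2, A j a b c * x a * x b * x c

/-- The tensor with `A_{1112} = A_{1222} = 1`, `A_{2111} = A_{2122} = -1`, all other entries zero. -/
noncomputable def A0 : Fin 2 → Fin 2 → Fin 2 → Fin 2 → ℝ := fun i j k l =>
  if (i, j, k, l) = (0, 0, 0, 1) ∨ (i, j, k, l) = (0, 1, 1, 1) then 1
  else if (i, j, k, l) = (1, 0, 0, 0) ∨ (i, j, k, l) = (1, 0, 1, 1) then -1
  else 0

/-! `A0 x³ = |x|² · (x₂, -x₁)` is `x` turned by a right angle and scaled by `|x|²`; pairing an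
eigen-equation `A0 x³ = λ x` with `(x₂, -x₁)` therefore gives `|x|⁴ = λ · 0`. -/

theorem app3_A0_zero (x : Fin 2 → ℝ) : app3 A0 x 0 = (x 0 ^ 2 + x 1 ^ 2) * x 1 := by
  simp only [app3, A0, Fin.sum_univ_two]
  norm_num
  ring

theorem app3_A0_one (x : Fin 2 → ℝ) : app3 A0 x 1 = -((x 0 ^ 2 + x 1 ^ 2) * x 0) := by
  simp only [app3, A0, Fin.sum_univ_two]
  norm_num
  ring

theorem sq_add_sq_eq_zero_of_app3_A0_eq_smul {lam : ℝ} {x : Fin 2 → ℝ}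
    (h : ∀ j, app3 A0 x j = lam * x j) : x 0 ^ 2 + x 1 ^ 2 = 0 := by
  have h0 := h 0
  have h1 := h 1
  rw [app3_A0_zero] at h0
  rw [app3_A0_one] at h1
  have hsq : (x 0 ^ 2 + x 1 ^ 2) ^ 2 = 0 := by linear_combination x 1 * h0 - x 0 * h1
  exact pow_eq_zero_iff two_ne_zero |>.mp hsq

/-- The tensor `A0` has no real Z-eigenpair. -/
theorem stmt0 :
    ¬ ∃ (lam : ℝ) (u : Fin 2 → ℝ),
        u 0 ^ 2 + u 1 ^ 2 = 1 ∧ ∀ j, app3 A0 u j = lam * u j := by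
  rintro ⟨lam, u, hunit, heig⟩
  have hzero := sq_add_sq_eq_zero_of_app3_A0_eq_smul heig
  rw [hunit] at hzero
  exact one_ne_zero hzero
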